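/- arXiv:1906.04492 — 4 statements merged into one kernel-verified Lean document; each statement's English description precedes it below -/
import Mathlib

section
/- An induced subgraph G of the hypercube Q_m has VC-dimension at most 1 if and only if G is a virtual isometric tree of Q_m, i.e., there exists an isometric tree T of Q_m (a tree isometrically embedded in Q_m) containing G as an induced subgraph. -/
/-!
A family of VC-dimension at most 1 shatters no pair of coordinates.

For such a family we build, by induction on the ground set, a connected family `T ⊇ V` in which
every coordinate labels at most one edge; on a path of such a family no coordinate flips twice,
so `T` is an isometric tree. In the inductive step the contraction of the last coordinate `i`
lies in such a tree `T`. No coordinate `j` varies both among the sets without `i` and among the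
(contracted) sets with `i`, since otherwise `{i, j}` would be shattered; hence the interval hulls
of the two subfamilies in `T` meet in at most one vertex, and `T` can be cut into two connected
pieces sharing a single vertex `b`, one containing each subfamily. Lifting the second piece by `i`
and joining it to the first by the edge `b — insert i b` gives the required family.

Conversely, in an isometric tree every coordinate `i` labels at most one edge, so all geodesics
between a set without `i` and a set with `i` pass through it. If `{i, j}` were shattered, the
geodesics `B₀₀ — B₁₀` and `B₀₁ — B₁₁` (indices giving membership of `i` and `j`) would share a
vertex, which would both avoid and contain `j`.
-/

open Finset

/-- The hypercube graph on subsets of `Fin m`. -/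
def cubeGraph (m : ℕ) : SimpleGraph (Finset (Fin m)) where
  Adj A B := (symmDiff A B).card = 1
  symm := ⟨fun A B h => by show (symmDiff B A).card = 1; rwa [symmDiff_comm]⟩
  loopless := ⟨fun A h => by simp only [symmDiff_self, bot_eq_empty, card_empty] at h; exact absurd h (by norm_num)⟩

/-- `V` is (the vertex set of) a partial cube isometrically embedded in `Q_m`:
the distance in the induced subgraph equals the Hamming distance. -/
def IsPC {m : ℕ} (V : Set (Finset (Fin m))) : Prop :=
  ∀ u v : V, ((cubeGraph m).induce V).dist u v = (symmDiff u.1 v.1).card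

def Shatters {m : ℕ} (V : Set (Finset (Fin m))) (Y : Finset (Fin m)) : Prop :=
  ∀ Z ⊆ Y, ∃ B ∈ V, B ∩ Y = Z

def VCdimLE {m : ℕ} (V : Set (Finset (Fin m))) (d : ℕ) : Prop :=
  ∀ Y : Finset (Fin m), Shatters V Y → Y.card ≤ d

inductive PCStep {m : ℕ} : Set (Finset (Fin m)) → Set (Finset (Fin m)) → Prop
  | contract (i : Fin m) (V : Set (Finset (Fin m))) :
      PCStep V ((fun B => B.erase i) '' V)
  | restrictPos (i : Fin m) (V : Set (Finset (Fin m))) :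
      PCStep V {B ∈ V | i ∈ B}
  | restrictNeg (i : Fin m) (V : Set (Finset (Fin m))) :
      PCStep V {B ∈ V | i ∉ B}

/-- Partial-cube minor relation: a sequence of contractions and restrictions. -/
def PCMinor {m : ℕ} : Set (Finset (Fin m)) → Set (Finset (Fin m)) → Prop :=
  Relation.ReflTransGen PCStep

/-- `W` is (the vertex set of) a `k`-dimensional subcube of `Q_m`. -/
def IsCubeFam {m : ℕ} (k : ℕ) (W : Set (Finset (Fin m))) : Prop :=
  ∃ (Y X : Finset (Fin m)), Disjoint Y X ∧ X.card = k ∧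
    W = {B | ∃ Z ⊆ X, B = Y ∪ Z}

/-- `G` has the cube `Q_k` as a pc-minor. -/
def HasQMinor {m : ℕ} (V : Set (Finset (Fin m))) (k : ℕ) : Prop :=
  ∃ W, PCMinor V W ∧ IsCubeFam k W

def hdist {m : ℕ} (A B : Finset (Fin m)) : ℕ := (symmDiff A B).card

def IsConvexIn {m : ℕ} (V S : Set (Finset (Fin m))) : Prop :=
  S ⊆ V ∧ ∀ u ∈ S, ∀ v ∈ S, ∀ x ∈ V, hdist u x + hdist x v = hdist u v → x ∈ S

def convexHullIn {m : ℕ} (V S : Set (Finset (Fin m))) : Set (Finset (Fin m)) :=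
  ⋂₀ {T | S ⊆ T ∧ IsConvexIn V T}

def IsGatedIn {m : ℕ} (V S : Set (Finset (Fin m))) : Prop :=
  S ⊆ V ∧ ∀ x ∈ V, ∃ g ∈ S, ∀ y ∈ S, hdist x g + hdist g y = hdist x y

/-- The standardly embedded full subdivision `SK_n` in `Q_n`: singletons and pairs. -/
def SKset (n : ℕ) : Set (Finset (Fin n)) := {B | B.card = 1 ∨ B.card = 2}

/-- A standardly embedded copy of `SK_n` in `Q_m` along the injection `ι`. -/
def skCopy {m : ℕ} (n : ℕ) (ι : Fin n → Fin m) : Set (Finset (Fin m)) :=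
  (fun B => B.image ι) '' SKset n

section Hamming

variable {m : ℕ} {A B C : Finset (Fin m)} {x : Fin m}

lemma hdist_comm (A B : Finset (Fin m)) : hdist A B = hdist B A := by
  rw [hdist, hdist, symmDiff_comm]

@[simp] lemma hdist_self (A : Finset (Fin m)) : hdist A A = 0 := by simp [hdist]

lemma hdist_eq_sum (A B : Finset (Fin m)) :
    hdist A B = ∑ x, if x ∈ symmDiff A B then 1 else 0 := by
  simp [hdist]

lemma hdist_triangle (A B C : Finset (Fin m)) : hdist A C ≤ hdist A B + hdist B C := by
  simp only [hdist_eq_sum, ← sum_add_distrib]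
  gcongr with x
  simp only [mem_symmDiff]
  split_ifs <;> tauto

lemma hdist_add_hdist_eq_iff : hdist A B + hdist B C = hdist A C ↔ B ∈ Set.uIcc A C := by
  simp only [hdist_eq_sum, ← sum_add_distrib]
  rw [eq_comm, sum_eq_sum_iff_of_le fun x _ => by simp only [mem_symmDiff]; split_ifs <;> tauto]
  simp only [Set.uIcc, Set.mem_Icc, inf_eq_inter, sup_eq_union, subset_iff, mem_inter, mem_union,
    mem_univ, true_implies, ← forall_and]
  refine forall_congr' fun x => ?_
  simp only [mem_symmDiff]
  split_ifs <;> tauto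

lemma mem_of_mem_uIcc (hB : B ∈ Set.uIcc A C) (hA : x ∈ A) (hC : x ∈ C) : x ∈ B :=
  hB.1 (mem_inter.2 ⟨hA, hC⟩)

lemma notMem_of_mem_uIcc (hB : B ∈ Set.uIcc A C) (hA : x ∉ A) (hC : x ∉ C) : x ∉ B :=
  fun hx => (mem_union.1 (hB.2 hx)).elim hA hC

lemma symmDiff_eq_singleton_of_mem (h : hdist A B = 1) (hx : x ∈ symmDiff A B) :
    symmDiff A B = {x} := by
  obtain ⟨y, hy⟩ := card_eq_one.1 h
  rw [hy, mem_singleton] at hx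
  rw [hy, hx]

lemma eq_insert_of_symmDiff_eq_singleton (h : symmDiff A B = {x}) (hxA : x ∉ A) :
    B = insert x A := by
  ext y
  have := congrArg (y ∈ ·) h
  simp only [mem_symmDiff, mem_singleton, eq_iff_iff] at this
  rcases eq_or_ne y x with rfl | hy
  · simp only [iff_true, mem_insert_self] at this ⊢
    tauto
  · simp only [hy, iff_false, mem_insert, false_or] at this ⊢
    tauto

lemma hdist_eq_add_one (hAB : symmDiff A B = {x}) (hx : x ∉ symmDiff B C) :
    hdist A C = hdist B C + 1 := by
  have hAC : symmDiff A C = symmDiff (symmDiff A B) (symmDiff B C) := by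
    rw [symmDiff_assoc, symmDiff_symmDiff_cancel_left]
  rw [hdist, hdist, hAC, hAB, (disjoint_singleton_left.2 hx).symmDiff_eq_sup, sup_eq_union,
    ← insert_eq, card_insert_of_notMem hx]

lemma symmDiff_insert_self (hx : x ∉ A) : symmDiff A (insert x A) = {x} := by
  ext y
  by_cases hy : y = x <;> simp [mem_symmDiff, hy, hx]

lemma insert_symmDiff_insert (hA : x ∉ A) (hB : x ∉ B) :
    symmDiff (insert x A) (insert x B) = symmDiff A B := by
  ext y
  by_cases hy : y = x <;> simp [mem_symmDiff, hy, hA, hB]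

lemma cubeGraph_adj_insert (hx : x ∉ A) : (cubeGraph m).Adj A (insert x A) := by
  show (symmDiff A (insert x A)).card = 1
  rw [symmDiff_insert_self hx, card_singleton]

end Hamming

section Shattering

variable {m d : ℕ} {V W : Set (Finset (Fin m))} {Y Z B : Finset (Fin m)} {i j : Fin m}

lemma Shatters.mono_left (h : Shatters V Y) (hVW : V ⊆ W) : Shatters W Y := fun Z hZ =>
  let ⟨B, hB, hBZ⟩ := h Z hZ
  ⟨B, hVW hB, hBZ⟩

lemma Shatters.mono_right (h : Shatters V Y) (hZY : Z ⊆ Y) : Shatters V Z := fun X hXZ => by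
  obtain ⟨B, hB, hBX⟩ := h X (hXZ.trans hZY)
  refine ⟨B, hB, ?_⟩
  rw [← inter_eq_right.2 hZY, ← inter_assoc, hBX, inter_eq_left.2 hXZ]

lemma VCdimLE.anti (h : VCdimLE W d) (hVW : V ⊆ W) : VCdimLE V d := fun Y hY =>
  h Y (hY.mono_left hVW)

lemma VCdimLE.image_erase (h : VCdimLE V d) (i : Fin m) : VCdimLE ((·.erase i) '' V) d := by
  intro Y hY
  have hiY : i ∉ Y := fun hiY => by
    obtain ⟨_, ⟨B, -, rfl⟩, hB⟩ := hY Y Subset.rfl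
    exact notMem_erase i B (mem_of_mem_inter_left (hB.symm ▸ hiY))
  refine h Y fun Z hZ => ?_
  obtain ⟨_, ⟨B, hB, rfl⟩, hBZ⟩ := hY Z hZ
  rw [erase_inter, erase_eq_of_notMem fun h => hiY (mem_of_mem_inter_right h)] at hBZ
  exact ⟨B, hB, hBZ⟩

lemma inter_pair_eq (hZ : Z ⊆ {i, j}) (hi : i ∈ B ↔ i ∈ Z) (hj : j ∈ B ↔ j ∈ Z) :
    B ∩ {i, j} = Z := by
  ext x
  have := @hZ x
  simp only [mem_inter, mem_insert, mem_singleton] at this ⊢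
  constructor
  · rintro ⟨hx, rfl | rfl⟩ <;> tauto
  · intro hx
    rcases this hx with rfl | rfl <;> tauto

lemma shatters_pair_iff (hij : i ≠ j) :
    Shatters V {i, j} ↔ ∀ p q : Prop, ∃ B ∈ V, (i ∈ B ↔ p) ∧ (j ∈ B ↔ q) := by
  classical
  constructor
  · intro h p q
    obtain ⟨B, hB, hBZ⟩ :=
      h (filter (fun x => (x = i ∧ p) ∨ (x = j ∧ q)) {i, j}) (filter_subset _ _)
    exact ⟨B, hB, by simpa [hij] using congrArg (i ∈ ·) hBZ,
      by simpa [hij.symm] using congrArg (j ∈ ·) hBZ⟩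
  · intro h Z hZ
    obtain ⟨B, hB, hi, hj⟩ := h (i ∈ Z) (j ∈ Z)
    exact ⟨B, hB, inter_pair_eq hZ hi hj⟩

lemma vcdimLE_one_iff : VCdimLE V 1 ↔ ∀ i j, i ≠ j → ¬ Shatters V {i, j} := by
  refine ⟨fun h i j hij hV => ?_, fun h Y hY => ?_⟩
  · simpa [card_pair hij] using h _ hV
  · by_contra! hY1
    obtain ⟨i, hi, j, hj, hij⟩ := one_lt_card.1 hY1
    exact h i j hij (hY.mono_right (insert_subset hi (singleton_subset_iff.2 hj)))

end Shattering

local notation "Q[" T "]" => SimpleGraph.induce T (cubeGraph _)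

open SimpleGraph

lemma SimpleGraph.connected_induce_of_walks {V : Type*} {G : SimpleGraph V} {s : Set V} {u : V}
    (hu : u ∈ s) (h : ∀ v ∈ s, ∃ p : G.Walk u v, ∀ x ∈ p.support, x ∈ s) :
    (G.induce s).Connected := by
  rw [connected_iff_exists_forall_reachable]
  refine ⟨⟨u, hu⟩, fun ⟨v, hv⟩ => ?_⟩
  obtain ⟨p, hp⟩ := h v hv
  exact ⟨p.induce s hp⟩

lemma SimpleGraph.Connected.induce_image {V W : Type*} {G : SimpleGraph V} {H : SimpleGraph W}
    {s : Set V} (hs : (G.induce s).Connected) (f : V → W)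
    (hf : ∀ a ∈ s, ∀ b ∈ s, G.Adj a b → H.Adj (f a) (f b)) : (H.induce (f '' s)).Connected := by
  let φ : G.induce s →g H.induce (f '' s) :=
    ⟨fun a => ⟨f a, a.1, a.2, rfl⟩, fun {a b} hab => hf a a.2 b b.2 hab⟩
  exact hs.map φ (by rintro ⟨_, a, ha, rfl⟩; exact ⟨⟨a, ha⟩, rfl⟩)

lemma SimpleGraph.connected_induce_singleton {V : Type*} (G : SimpleGraph V) (v : V) :
    (G.induce {v}).Connected := by
  rw [induce_singleton_eq_top]
  exact connected_top

section Walks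

variable {m : ℕ} {T : Set (Finset (Fin m))} {u v : T}

lemma hdist_le_length (p : Q[T].Walk u v) : hdist u.1 v.1 ≤ p.length := by
  induction p with
  | nil => simp
  | @cons a b c hab q ih =>
    have : hdist a.1 b.1 = 1 := hab
    have := hdist_triangle a.1 b.1 c.1
    rw [Walk.length_cons]
    omega

lemma mem_uIcc_of_mem_support (p : Q[T].Walk u v) (hp : p.length = hdist u.1 v.1) {z : T}
    (hz : z ∈ p.support) : z.1 ∈ Set.uIcc u.1 v.1 := by
  rw [← hdist_add_hdist_eq_iff]
  have hlen := congrArg Walk.length (p.take_spec hz)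
  rw [Walk.length_append] at hlen
  have := hdist_le_length (p.takeUntil z hz)
  have := hdist_le_length (p.dropUntil z hz)
  have := hdist_triangle u.1 z.1 v.1
  omega

lemma exists_dart_mem_symmDiff (p : Q[T].Walk u v) {x : Fin m} (hx : x ∈ symmDiff u.1 v.1) :
    ∃ d ∈ p.darts, x ∈ symmDiff d.fst.1 d.snd.1 := by
  rw [mem_symmDiff] at hx
  obtain ⟨d, hd, hfst, hsnd⟩ :=
    p.exists_boundary_dart {z | x ∈ z.1 ↔ x ∈ u.1} Iff.rfl (by simp only [Set.mem_ofPred_eq]; tauto)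
  simp only [Set.mem_ofPred_eq] at hfst hsnd
  exact ⟨d, hd, by rw [mem_symmDiff]; tauto⟩

lemma exists_geodesic (hPC : IsPC T) (hT : Q[T].Connected) (u v : T) :
    ∃ p : Q[T].Walk u v, p.IsPath ∧ p.length = hdist u.1 v.1 := by
  obtain ⟨p, hp⟩ := (hT.preconnected u v).exists_walk_length_eq_dist
  exact ⟨p, p.isPath_of_length_eq_dist hp, hp.trans (hPC u v)⟩

end Walks

section EdgeLabels

variable {m : ℕ} {T : Set (Finset (Fin m))}

/-- Every coordinate is flipped along at most one edge of `T`; an edge flipping `x` is recorded by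
its end `A` with `x ∉ A`. -/
def EdgeLabelsInjective (T : Set (Finset (Fin m))) : Prop :=
  ∀ ⦃x A B⦄, A ∈ T → B ∈ T → x ∉ A → x ∉ B → insert x A ∈ T → insert x B ∈ T → A = B

lemma exists_lower_end {d : Q[T].Dart} {x : Fin m} (hx : x ∈ symmDiff d.fst.1 d.snd.1) :
    ∃ A ∈ T, x ∉ A ∧ insert x A ∈ T ∧ s(d.fst.1, d.snd.1) = s(A, insert x A) := by
  have h : symmDiff d.fst.1 d.snd.1 = {x} := symmDiff_eq_singleton_of_mem d.adj hx
  by_cases hxf : x ∈ d.fst.1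
  · have hxs : x ∉ d.snd.1 := fun hxs => by simp [mem_symmDiff, hxf, hxs] at hx
    rw [symmDiff_comm] at h
    have := eq_insert_of_symmDiff_eq_singleton h hxs
    exact ⟨d.snd.1, d.snd.2, hxs, this ▸ d.fst.2, by rw [this, Sym2.eq_swap]⟩
  · have := eq_insert_of_symmDiff_eq_singleton h hxf
    exact ⟨d.fst.1, d.fst.2, hxf, this ▸ d.snd.2, by rw [this]⟩

lemma EdgeLabelsInjective.dart_edge_eq (h : EdgeLabelsInjective T) {d e : Q[T].Dart} {x : Fin m}
    (hd : x ∈ symmDiff d.fst.1 d.snd.1) (he : x ∈ symmDiff e.fst.1 e.snd.1) :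
    d.edge = e.edge := by
  obtain ⟨A, hA, hxA, hxA', hdA⟩ := exists_lower_end hd
  obtain ⟨B, hB, hxB, hxB', heB⟩ := exists_lower_end he
  apply Sym2.map.injective Subtype.val_injective
  simp only [Dart.edge, Sym2.map_mk]
  rw [hdA, heB, h hA hB hxA hxB hxA' hxB']

lemma EdgeLabelsInjective.length_eq_hdist (h : EdgeLabelsInjective T) {u v : T}
    {p : Q[T].Walk u v} (hp : p.IsPath) : p.length = hdist u.1 v.1 := by
  induction p with
  | nil => simp
  | @cons a b c hab q ih =>
    rw [Walk.cons_isPath_iff] at hp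
    obtain ⟨x, hx⟩ : ∃ x, symmDiff a.1 b.1 = {x} := card_eq_one.1 hab
    have hxq : x ∉ symmDiff b.1 c.1 := fun hxq => by
      obtain ⟨d, hd, hdx⟩ := exists_dart_mem_symmDiff q hxq
      have hdq : d.edge ∈ q.edges := List.mem_map_of_mem hd
      rw [h.dart_edge_eq hdx (e := ⟨(a, b), hab⟩) (by simp [hx])] at hdq
      exact hp.2 (q.fst_mem_support_of_mem_edges hdq)
    rw [Walk.length_cons, ih hp.1, hdist_eq_add_one hx hxq]

lemma EdgeLabelsInjective.isAcyclic (h : EdgeLabelsInjective T) : Q[T].IsAcyclic := by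
  intro v c hc
  have h3 := hc.three_le_length
  cases c with
  | nil => simp at h3
  | @cons _ b _ hvb q =>
    have hq := h.length_eq_hdist ((Walk.cons_isCycle_iff q hvb).1 hc).1
    have : hdist v.1 b.1 = 1 := hvb
    rw [Walk.length_cons, hq, hdist_comm] at h3
    omega

lemma EdgeLabelsInjective.isPC (h : EdgeLabelsInjective T) (hT : Q[T].Connected) : IsPC T := by
  intro u v
  obtain ⟨p, hp⟩ := (hT.preconnected u v).exists_walk_length_eq_dist
  exact hp.symm.trans (h.length_eq_hdist (p.isPath_of_length_eq_dist hp))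

/-- In a tree two paths from `A` to `insert x B` exist, one through `B` and one through
`insert x A`; uniqueness of paths forces `A = B`. -/
lemma edgeLabelsInjective_of_isTree (hPC : IsPC T) (hT : Q[T].IsTree) : EdgeLabelsInjective T := by
  intro x A B hA hB hxA hxB hxA' hxB'
  by_contra hAB
  obtain ⟨p, hp, hpl⟩ := exists_geodesic hPC hT.connected ⟨A, hA⟩ ⟨B, hB⟩
  obtain ⟨q, hq, hql⟩ := exists_geodesic hPC hT.connected ⟨insert x A, hxA'⟩ ⟨insert x B, hxB'⟩
  have hxp : ∀ z ∈ p.support, x ∉ z.1 := fun z hz =>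
    notMem_of_mem_uIcc (mem_uIcc_of_mem_support p hpl hz) hxA hxB
  have hxq : ∀ z ∈ q.support, x ∈ z.1 := fun z hz =>
    mem_of_mem_uIcc (mem_uIcc_of_mem_support q hql hz) (mem_insert_self x A) (mem_insert_self x B)
  have hAA : Q[T].Adj ⟨A, hA⟩ ⟨insert x A, hxA'⟩ := cubeGraph_adj_insert hxA
  have hBB : Q[T].Adj ⟨B, hB⟩ ⟨insert x B, hxB'⟩ := cubeGraph_adj_insert hxB
  have hP₁ : (p.concat hBB).IsPath := hp.concat (fun h => hxp _ h (mem_insert_self x B)) _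
  have hP₂ : (Walk.cons hAA q).IsPath := hq.cons (fun h => hxA (hxq _ h))
  have hpq := congrArg (·.1.support) ((hT.isAcyclic.subsingleton_path _ _).elim ⟨_, hP₁⟩ ⟨_, hP₂⟩)
  have hB_mem : (⟨B, hB⟩ : T) ∈ (Walk.cons hAA q).support := by
    simp only at hpq
    simp [← hpq, Walk.support_concat]
  rcases List.mem_cons.1 (Walk.support_cons _ _ ▸ hB_mem) with h | h
  · exact hAB (congrArg Subtype.val h).symm
  · exact hxB (hxq _ h)

lemma exists_mem_uIcc_inter_uIcc (hPC : IsPC T) (hT : Q[T].Connected) (h : EdgeLabelsInjective T)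
    {u v u' v' : T} {x : Fin m} (hx : x ∈ symmDiff u.1 v.1) (hx' : x ∈ symmDiff u'.1 v'.1) :
    ∃ z : T, z.1 ∈ Set.uIcc u.1 v.1 ∧ z.1 ∈ Set.uIcc u'.1 v'.1 := by
  obtain ⟨p, -, hp⟩ := exists_geodesic hPC hT u v
  obtain ⟨p', -, hp'⟩ := exists_geodesic hPC hT u' v'
  obtain ⟨d, hd, hdx⟩ := exists_dart_mem_symmDiff p hx
  obtain ⟨d', hd', hdx'⟩ := exists_dart_mem_symmDiff p' hx'
  have hdp' : d'.edge ∈ p'.edges := List.mem_map_of_mem hd'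
  rw [← h.dart_edge_eq hdx hdx'] at hdp'
  exact ⟨d.fst, mem_uIcc_of_mem_support p hp (p.dart_fst_mem_support_of_mem_darts hd),
    mem_uIcc_of_mem_support p' hp' (p'.fst_mem_support_of_mem_edges hdp')⟩

lemma vcdimLE_one_of_isTree (hPC : IsPC T) (hT : Q[T].IsTree) : VCdimLE T 1 := by
  refine vcdimLE_one_iff.2 fun i j hij hsh => ?_
  have hpat := (shatters_pair_iff hij).1 hsh
  obtain ⟨B₀₀, h₀₀, hi₀₀, hj₀₀⟩ := hpat False False
  obtain ⟨B₁₀, h₁₀, hi₁₀, hj₁₀⟩ := hpat True False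
  obtain ⟨B₀₁, h₀₁, hi₀₁, hj₀₁⟩ := hpat False True
  obtain ⟨B₁₁, h₁₁, hi₁₁, hj₁₁⟩ := hpat True True
  simp only [iff_false, iff_true] at hi₀₀ hj₀₀ hi₁₀ hj₁₀ hi₀₁ hj₀₁ hi₁₁ hj₁₁
  obtain ⟨z, hz, hz'⟩ := exists_mem_uIcc_inter_uIcc (u := ⟨B₀₀, h₀₀⟩) (v := ⟨B₁₀, h₁₀⟩)
    (u' := ⟨B₀₁, h₀₁⟩) (v' := ⟨B₁₁, h₁₁⟩) hPC hT.connected (edgeLabelsInjective_of_isTree hPC hT)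
    (mem_symmDiff.2 (Or.inr ⟨hi₁₀, hi₀₀⟩)) (mem_symmDiff.2 (Or.inr ⟨hi₁₁, hi₀₁⟩))
  exact notMem_of_mem_uIcc hz hj₀₀ hj₁₀ (mem_of_mem_uIcc hz' hj₀₁ hj₁₁)

end EdgeLabels

section IntervalHull

variable {m : ℕ} {T X X₀ X₁ : Set (Finset (Fin m))}

def Varies (X : Set (Finset (Fin m))) (j : Fin m) : Prop :=
  (∃ B ∈ X, j ∈ B) ∧ ∃ B ∈ X, j ∉ B

def intervalHull (T X : Set (Finset (Fin m))) : Set (Finset (Fin m)) :=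
  {y | y ∈ T ∧ ∃ u ∈ X, ∃ v ∈ X, y ∈ Set.uIcc u v}

lemma intervalHull_subset : intervalHull T X ⊆ T := fun _ hy => hy.1

lemma subset_intervalHull (hXT : X ⊆ T) : X ⊆ intervalHull T X :=
  fun y hy => ⟨hXT hy, y, hy, y, hy, Set.left_mem_uIcc⟩

lemma varies_of_mem_intervalHull {y u : Finset (Fin m)} (hy : y ∈ intervalHull T X) (hu : u ∈ X)
    {j : Fin m} (hj : j ∈ symmDiff u y) : Varies X j := by
  obtain ⟨-, a, ha, b, hb, hab⟩ := hy
  rcases mem_symmDiff.1 hj with ⟨hju, hjy⟩ | ⟨hjy, hju⟩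
  · have : j ∉ a ∨ j ∉ b := by
      by_contra! h
      exact hjy (mem_of_mem_uIcc hab h.1 h.2)
    exact ⟨⟨u, hu, hju⟩, this.elim (fun h => ⟨a, ha, h⟩) fun h => ⟨b, hb, h⟩⟩
  · have : j ∈ a ∨ j ∈ b := by
      by_contra! h
      exact notMem_of_mem_uIcc hab h.1 h.2 hjy
    exact ⟨this.elim (fun h => ⟨a, ha, h⟩) fun h => ⟨b, hb, h⟩, ⟨u, hu, hju⟩⟩

lemma intervalHull_inter_subsingleton (hvar : ∀ j, Varies X₀ j → Varies X₁ j → False)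
    (h₀ : X₀.Nonempty) (h₁ : X₁.Nonempty) :
    (intervalHull T X₀ ∩ intervalHull T X₁).Subsingleton := by
  obtain ⟨u₀, hu₀⟩ := h₀
  obtain ⟨u₁, hu₁⟩ := h₁
  rintro y ⟨hy₀, hy₁⟩ y' ⟨hy₀', hy₁'⟩
  by_contra hne
  obtain ⟨j, hj⟩ : (symmDiff y y').Nonempty := by
    rwa [nonempty_iff_ne_empty, ne_eq, ← bot_eq_empty, symmDiff_eq_bot]
  have hsplit : ∀ u, j ∈ symmDiff u y ∨ j ∈ symmDiff u y' := fun u => by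
    simp only [mem_symmDiff] at hj ⊢
    tauto
  exact hvar j
    ((hsplit u₀).elim (varies_of_mem_intervalHull hy₀ hu₀) (varies_of_mem_intervalHull hy₀' hu₀))
    ((hsplit u₁).elim (varies_of_mem_intervalHull hy₁ hu₁) (varies_of_mem_intervalHull hy₁' hu₁))

lemma connected_intervalHull (hPC : IsPC T) (hT : Q[T].Connected) (hXT : X ⊆ T)
    {u : Finset (Fin m)} (hu : u ∈ X) : Q[intervalHull T X].Connected := by
  refine connected_induce_of_walks (subset_intervalHull hXT hu) fun y ⟨hyT, a, ha, b, hb, hy⟩ => ?_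
  obtain ⟨p, -, hp⟩ := exists_geodesic hPC hT ⟨u, hXT hu⟩ ⟨a, hXT ha⟩
  obtain ⟨q, -, hq⟩ := exists_geodesic hPC hT ⟨a, hXT ha⟩ ⟨y, hyT⟩
  refine ⟨(p.append q).map (Embedding.induce T).toHom, fun z hz => ?_⟩
  erw [Walk.support_map] at hz
  simp only [Walk.mem_support_append_iff, List.mem_map] at hz
  obtain ⟨z, hz | hz, rfl⟩ := hz
  · exact ⟨z.2, u, hu, a, ha, mem_uIcc_of_mem_support p hp hz⟩
  · exact ⟨z.2, a, ha, b, hb, Set.uIcc_subset_uIcc_left hy (mem_uIcc_of_mem_support q hq hz)⟩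

/-- `C` is the component of `u` in `T \ A`; a walk in `T` from `u` into `A` leaves `C` through an
edge whose far end must lie in `A`. -/
lemma exists_connected_exit (hT : Q[T].Connected) {A : Set (Finset (Fin m))} (hAT : A ⊆ T)
    {u w : Finset (Fin m)} (hu : u ∈ T) (huA : u ∉ A) (hw : w ∈ A) :
    ∃ C ⊆ T, u ∈ C ∧ Disjoint C A ∧ Q[C].Connected ∧
      ∃ c ∈ C, ∃ b ∈ A, (cubeGraph m).Adj c b := by
  set C := {z | ∃ p : (cubeGraph m).Walk u z, ∀ y ∈ p.support, y ∈ T ∧ y ∉ A}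
  have huC : u ∈ C := ⟨.nil, by simpa using ⟨hu, huA⟩⟩
  have hCA : Disjoint C A := Set.disjoint_left.2 fun z ⟨p, hp⟩ => (hp z p.end_mem_support).2
  refine ⟨C, fun z ⟨p, hp⟩ => (hp z p.end_mem_support).1, huC, hCA,
    connected_induce_of_walks huC fun z ⟨p, hp⟩ => ⟨p, fun y hy =>
      ⟨p.takeUntil y hy, fun x hx => hp x (p.support_takeUntil_subset_support hy hx)⟩⟩, ?_⟩
  obtain ⟨P⟩ := hT.preconnected ⟨u, hu⟩ ⟨w, hAT hw⟩
  obtain ⟨d, hd, ⟨p, hp⟩, hsnd⟩ := (P.map (Embedding.induce T).toHom).exists_boundary_dart C huC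
    (Set.disjoint_right.1 hCA hw)
  refine ⟨d.fst, ⟨p, hp⟩, d.snd, by_contra fun hA => hsnd ⟨p.concat d.adj, fun y hy => ?_⟩, d.adj⟩
  rw [Walk.support_concat, List.mem_append, List.mem_singleton] at hy
  rcases hy with hy | rfl
  · exact hp y hy
  · have hsT := Walk.dart_snd_mem_support_of_mem_darts _ hd
    simp only [Walk.support_map, List.mem_map] at hsT
    obtain ⟨z, -, hz⟩ := hsT
    exact ⟨hz ▸ z.2, hA⟩

lemma exists_connected_split (hPC : IsPC T) (hT : Q[T].Connected) (h₀ : X₀ ⊆ T) (h₁ : X₁ ⊆ T)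
    (hvar : ∀ j, Varies X₀ j → Varies X₁ j → False) :
    ∃ A₀ A₁ b, X₀ ⊆ A₀ ∧ X₁ ⊆ A₁ ∧ A₀ ⊆ T ∧ A₁ ⊆ T ∧ Q[A₀].Connected ∧ Q[A₁].Connected ∧
      A₀ ∩ A₁ = {b} := by
  rcases X₁.eq_empty_or_nonempty with rfl | ⟨w, hw⟩
  · obtain ⟨⟨b, hb⟩⟩ := hT.nonempty
    exact ⟨T, {b}, b, h₀, Set.empty_subset _, subset_rfl, Set.singleton_subset_iff.2 hb, hT,
      connected_induce_singleton _ b, Set.inter_singleton_of_mem hb⟩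
  rcases X₀.eq_empty_or_nonempty with rfl | ⟨u, hu⟩
  · exact ⟨{w}, T, w, Set.empty_subset _, h₁, Set.singleton_subset_iff.2 (h₁ hw), subset_rfl,
      connected_induce_singleton _ w, hT, Set.singleton_inter_of_mem (h₁ hw)⟩
  have hH₀ := connected_intervalHull hPC hT h₀ hu
  have hH₁ := connected_intervalHull hPC hT h₁ hw
  by_cases hmeet : (intervalHull T X₀ ∩ intervalHull T X₁).Nonempty
  · obtain ⟨y, hy⟩ := hmeet
    exact ⟨_, _, y, subset_intervalHull h₀, subset_intervalHull h₁, intervalHull_subset,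
      intervalHull_subset, hH₀, hH₁,
      (intervalHull_inter_subsingleton hvar ⟨u, hu⟩ ⟨w, hw⟩).eq_singleton_of_mem hy⟩
  rw [Set.not_nonempty_iff_eq_empty, ← Set.disjoint_iff_inter_eq_empty] at hmeet
  obtain ⟨C, hCT, huC, hCH₁, hC, c, hc, b, hb, hcb⟩ := exists_connected_exit hT intervalHull_subset
    (h₀ hu) (Set.disjoint_left.1 hmeet (subset_intervalHull h₀ hu)) (subset_intervalHull h₁ hw)
  have hA₀ : Q[intervalHull T X₀ ∪ C ∪ {b}].Connected :=
    connected_induce_union (induce_union_connected hH₀.preconnected hC.preconnected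
        ⟨u, subset_intervalHull h₀ hu, huC⟩).preconnected
      (connected_induce_singleton _ b).preconnected (Or.inr hc) rfl hcb
  have hA₀₁ : (intervalHull T X₀ ∪ C ∪ {b}) ∩ intervalHull T X₁ = {b} := by
    rw [Set.union_inter_distrib_right, Set.union_inter_distrib_right, hmeet.inter_eq,
      hCH₁.inter_eq, Set.singleton_inter_of_mem hb, Set.empty_union, Set.empty_union]
  exact ⟨_, _, b, fun x hx => Or.inl (Or.inl (subset_intervalHull h₀ hx)), subset_intervalHull h₁,
    Set.union_subset (Set.union_subset intervalHull_subset hCT)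
      (Set.singleton_subset_iff.2 (intervalHull_subset hb)), intervalHull_subset, hA₀, hH₁, hA₀₁⟩

end IntervalHull

section Gluing

variable {m : ℕ} {T A₀ A₁ : Set (Finset (Fin m))} {i : Fin m}

lemma connected_glue (h₀ : Q[A₀].Connected) (h₁ : Q[A₁].Connected) (hi : ∀ a ∈ A₁, i ∉ a)
    {b : Finset (Fin m)} (hb₀ : b ∈ A₀) (hb₁ : b ∈ A₁) : Q[A₀ ∪ insert i '' A₁].Connected := by
  have hlift : Q[insert i '' A₁].Connected := h₁.induce_image (insert i) fun a ha a' ha' haa' => by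
    show (symmDiff (insert i a) (insert i a')).card = 1
    rwa [insert_symmDiff_insert (hi a ha) (hi a' ha')]
  exact connected_induce_union h₀.preconnected hlift.preconnected hb₀ (Set.mem_image_of_mem _ hb₁)
    (cubeGraph_adj_insert (hi b hb₁))

lemma mem_glue_iff (hi : ∀ B ∈ T, i ∉ B) (h₀ : A₀ ⊆ T) (h₁ : A₁ ⊆ T) {A : Finset (Fin m)} :
    A ∈ A₀ ∪ insert i '' A₁ ↔ A.erase i ∈ if i ∈ A then A₁ else A₀ := by
  by_cases hiA : i ∈ A
  · simp only [hiA, if_true]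
    constructor
    · rintro (hA | ⟨a, ha, rfl⟩)
      · exact absurd hiA (hi A (h₀ hA))
      · rwa [erase_insert (hi a (h₁ ha))]
    · exact fun hA => Or.inr ⟨_, hA, insert_erase hiA⟩
  · simp only [hiA, if_false, erase_eq_of_notMem hiA]
    constructor
    · rintro (hA | ⟨a, -, rfl⟩)
      · exact hA
      · exact absurd (mem_insert_self i a) hiA
    · exact Or.inl

/-- The only `i`-edge of the glued family is the new one at the gluing vertex. Erasing `i` maps
any other `x`-edge to an `x`-edge of `A₀` or of `A₁`, and an edge of both would lie in the
at most one-point set `A₀ ∩ A₁`. -/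
lemma edgeLabelsInjective_glue (hT : EdgeLabelsInjective T) (hi : ∀ B ∈ T, i ∉ B) (h₀ : A₀ ⊆ T)
    (h₁ : A₁ ⊆ T) (h₀₁ : (A₀ ∩ A₁).Subsingleton) : EdgeLabelsInjective (A₀ ∪ insert i '' A₁) := by
  have hside : ∀ A : Finset (Fin m), (if i ∈ A then A₁ else A₀) ⊆ T := fun A => by
    split_ifs
    exacts [h₁, h₀]
  intro x A B hA hB hxA hxB hxA' hxB'
  rw [mem_glue_iff hi h₀ h₁] at hA hB hxA' hxB'
  rcases eq_or_ne x i with rfl | hxi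
  · simp only [hxA, hxB, mem_insert_self, if_true, if_false, erase_insert hxA, erase_insert hxB,
      erase_eq_of_notMem hxA, erase_eq_of_notMem hxB] at hA hB hxA' hxB'
    exact h₀₁ ⟨hA, hxA'⟩ ⟨hB, hxB'⟩
  simp only [mem_insert, hxi.symm, false_or, erase_insert_of_ne hxi] at hxA' hxB'
  have hAB : A.erase i = B.erase i := hT (hside A hA) (hside B hB)
    (fun h => hxA (mem_of_mem_erase h)) (fun h => hxB (mem_of_mem_erase h)) (hside A hxA')
    (hside B hxB')
  have hmixed : ∀ a, x ∉ a → a ∈ A₀ ∩ A₁ → insert x a ∈ A₀ ∩ A₁ → False := fun a hxa ha hxa' =>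
    hxa (h₀₁ hxa' ha ▸ mem_insert_self x a)
  by_cases hiA : i ∈ A <;> by_cases hiB : i ∈ B <;>
    simp only [hiA, hiB, if_true, if_false] at hA hB hxA' hxB'
  · rw [← insert_erase hiA, ← insert_erase hiB, hAB]
  · rw [erase_eq_of_notMem hiB] at hAB hB hxB'
    exact (hmixed _ (fun h => hxA (mem_of_mem_erase h)) ⟨hAB ▸ hB, hA⟩ ⟨hAB ▸ hxB', hxA'⟩).elim
  · rw [erase_eq_of_notMem hiA] at hAB hA hxA'
    exact (hmixed _ hxA ⟨hA, hAB ▸ hB⟩ ⟨hxA', hAB ▸ hxB'⟩).elim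
  · rwa [erase_eq_of_notMem hiA, erase_eq_of_notMem hiB] at hAB

end Gluing

section Construction

variable {m : ℕ}

lemma VCdimLE.not_varies_and_varies {V : Set (Finset (Fin m))} (hV : VCdimLE V 1) (i j : Fin m)
    (h₀ : Varies {B | B ∈ V ∧ i ∉ B} j) (h₁ : Varies ((·.erase i) '' {B | B ∈ V ∧ i ∈ B}) j) :
    False := by
  obtain ⟨⟨B₀₁, ⟨hB₀₁, hi₀₁⟩, hj₀₁⟩, ⟨B₀₀, ⟨hB₀₀, hi₀₀⟩, hj₀₀⟩⟩ := h₀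
  obtain ⟨⟨_, ⟨B₁₁, ⟨hB₁₁, hi₁₁⟩, rfl⟩, hj₁₁⟩, ⟨_, ⟨B₁₀, ⟨hB₁₀, hi₁₀⟩, rfl⟩, hj₁₀⟩⟩ := h₁
  have hij : i ≠ j := fun h => hi₀₁ (h ▸ hj₀₁)
  replace hj₁₁ := mem_of_mem_erase hj₁₁
  replace hj₁₀ : j ∉ B₁₀ := fun h => hj₁₀ (mem_erase.2 ⟨hij.symm, h⟩)
  refine vcdimLE_one_iff.1 hV i j hij ((shatters_pair_iff hij).2 fun p q => ?_)
  by_cases hp : p <;> by_cases hq : q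
  · exact ⟨B₁₁, hB₁₁, iff_of_true hi₁₁ hp, iff_of_true hj₁₁ hq⟩
  · exact ⟨B₁₀, hB₁₀, iff_of_true hi₁₀ hp, iff_of_false hj₁₀ hq⟩
  · exact ⟨B₀₁, hB₀₁, iff_of_false hi₀₁ hp, iff_of_true hj₀₁ hq⟩
  · exact ⟨B₀₀, hB₀₀, iff_of_false hi₀₀ hp, iff_of_false hj₀₀ hq⟩

theorem exists_connected_edgeLabelsInjective_superset (S : Finset (Fin m))
    (V : Set (Finset (Fin m))) (hVS : ∀ B ∈ V, B ⊆ S) (hV : VCdimLE V 1) :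
    ∃ T, V ⊆ T ∧ (∀ B ∈ T, B ⊆ S) ∧ Q[T].Connected ∧ EdgeLabelsInjective T := by
  classical
  induction S using Finset.induction_on generalizing V with
  | empty =>
    refine ⟨{∅}, fun B hB => subset_empty.1 (hVS B hB), fun B hB => hB ▸ Subset.rfl,
      connected_induce_singleton _ ∅, fun x A _ _ _ _ _ hxA _ => ?_⟩
    exact absurd hxA (insert_ne_empty x A)
  | insert i S hiS ih =>
    obtain ⟨T, hVT, hTS, hT, hinj⟩ := ih ((·.erase i) '' V)
      (by rintro _ ⟨B, hB, rfl⟩; exact subset_insert_iff.1 (hVS B hB)) (hV.image_erase i)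
    have hiT : ∀ B ∈ T, i ∉ B := fun B hB h => hiS (hTS B hB h)
    obtain ⟨A₀, A₁, b, hX₀, hX₁, hA₀T, hA₁T, hA₀, hA₁, hb⟩ :=
      exists_connected_split (X₀ := {B | B ∈ V ∧ i ∉ B})
        (X₁ := (·.erase i) '' {B | B ∈ V ∧ i ∈ B}) (hinj.isPC hT) hT
        (fun B ⟨hB, hiB⟩ => hVT ⟨B, hB, erase_eq_of_notMem hiB⟩)
        ((Set.image_mono fun _ hB => hB.1).trans hVT) (hV.not_varies_and_varies i)
    have hb' : b ∈ A₀ ∩ A₁ := hb ▸ rfl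
    refine ⟨A₀ ∪ insert i '' A₁, fun B hB => ?_, ?_,
      connected_glue hA₀ hA₁ (fun a ha => hiT a (hA₁T ha)) hb'.1 hb'.2,
      edgeLabelsInjective_glue hinj hiT hA₀T hA₁T (hb ▸ Set.subsingleton_singleton)⟩
    · by_cases hiB : i ∈ B
      · exact Or.inr ⟨_, hX₁ ⟨B, ⟨hB, hiB⟩, rfl⟩, insert_erase hiB⟩
      · exact Or.inl (hX₀ ⟨hB, hiB⟩)
    · rintro _ (hB | ⟨a, ha, rfl⟩)
      · exact (hTS _ (hA₀T hB)).trans (subset_insert _ _)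
      · exact insert_subset_insert i (hTS _ (hA₁T ha))

end Construction

/-- An induced subgraph of `Q_m` has VC-dimension at most 1 iff it is a virtual
isometric tree: it is contained in an isometric tree of `Q_m`. -/
theorem stmt1 (m : ℕ) (V : Set (Finset (Fin m))) :
    VCdimLE V 1 ↔
      ∃ T : Set (Finset (Fin m)), V ⊆ T ∧ IsPC T ∧
        ((cubeGraph m).induce T).IsTree := by
  constructor
  · intro hV
    obtain ⟨T, hVT, -, hT, hinj⟩ :=
      exists_connected_edgeLabelsInjective_superset univ V (fun B _ => subset_univ B) hV
    exact ⟨T, hVT, hinj.isPC hT, ⟨hT, hinj.isAcyclic⟩⟩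
  · rintro ⟨T, hVT, hPC, hT⟩
    exact (vcdimLE_one_of_isTree hPC hT).anti hVT
end

section
/- A partial cube G has VC-dimension at most d if and only if each hyperplane H_i of G has VC-dimension at most d−1, where the hyperplane of a Θ-class E_i is the 1-inclusion graph of the set family obtained from the union of the two boundaries ∂G_i⁻ ∪ ∂G_i⁺ by removing the coordinate i from each set. -/
open Finset

/-- The hyperplane of the Θ-class `E_i`: boundaries with coordinate `i` removed. -/
def hyperplane {m : ℕ} (V : Set (Finset (Fin m))) (i : Fin m) : Set (Finset (Fin m)) :=
  {B | i ∉ B ∧ B ∈ V ∧ insert i B ∈ V}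

/-! If `H_i` shatters `Y`, then `i ∉ Y` and `V` shatters `insert i Y`: a pattern `Z` is cut out
by `B` or by `insert i B` for a suitable `B ∈ H_i`. Conversely, let `V` shatter `Y ∋ i` and
`Z ⊆ Y \ {i}`, and pick `B₀, B₁ ∈ V` with traces `Z` and `insert i Z` on `Y`. In a partial cube
a geodesic from `B₀` to `B₁` crosses an `i`-edge, and its lower endpoint `B` lies in the interval
`B₀ ∩ B₁ ⊆ B ⊆ B₀ ∪ B₁`; hence `B ∈ H_i` has trace `Z` on `Y \ {i}`. -/

open scoped symmDiff

section Interval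

variable {α : Type*} [DecidableEq α]

lemma Finset.subset_of_card_symmDiff_add_eq {a b x : Finset α}
    (h : #(a ∆ x) + #(x ∆ b) = #(a ∆ b)) : a ∩ b ⊆ x ∧ x ⊆ a ∪ b := by
  have hdisj : a ∆ x ∩ x ∆ b = ∅ := by
    have htri : #(a ∆ b) ≤ #(a ∆ x ∪ x ∆ b) := card_le_card (symmDiff_triangle a x b)
    have := card_union_add_card_inter (a ∆ x) (x ∆ b)
    exact card_eq_zero.mp (by omega)
  have hy := eq_empty_iff_forall_notMem.1 hdisj
  constructor <;> intro y <;> have := hy y <;>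
    simp only [mem_inter, mem_union, mem_symmDiff] at * <;> tauto

lemma Finset.inter_eq_of_subset_of_subset {B₀ B₁ B T Z : Finset α}
    (h₀ : B₀ ∩ T = Z) (h₁ : B₁ ∩ T = Z) (hlo : B₀ ∩ B₁ ⊆ B) (hhi : B ⊆ B₀ ∪ B₁) :
    B ∩ T = Z := by
  subst h₀
  ext x
  have := Finset.ext_iff.1 h₁ x
  have := @hlo x
  have := @hhi x
  simp only [mem_inter, mem_union] at *
  tauto

end Interval

variable {m : ℕ} {V : Set (Finset (Fin m))}

lemma cubeGraph_adj_iff {u w : Finset (Fin m)} : (cubeGraph m).Adj u w ↔ #(u ∆ w) = 1 := .rfl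

lemma eq_insert_of_cubeGraph_adj {i : Fin m} {u w : Finset (Fin m)} (h : (cubeGraph m).Adj u w)
    (hiu : i ∉ u) (hiw : i ∈ w) : w = insert i u := by
  obtain ⟨j, hj⟩ := card_eq_one.mp h
  have hji : j = i := by simpa [hj, eq_comm] using (mem_symmDiff.2 (Or.inr ⟨hiw, hiu⟩) : i ∈ u ∆ w)
  rw [← symmDiff_symmDiff_cancel_left u w, hj, hji]
  ext x
  by_cases hx : x = i <;> simp [mem_symmDiff, hx, hiu]

lemma IsPC.exists_adj_between (hV : IsPC V) {u v : Finset (Fin m)} (hu : u ∈ V) (hv : v ∈ V)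
    (huv : u ≠ v) : ∃ w ∈ V, (cubeGraph m).Adj u w ∧ #(u ∆ w) + #(w ∆ v) = #(u ∆ v) := by
  have hdist : ((cubeGraph m).induce V).dist ⟨u, hu⟩ ⟨v, hv⟩ = #(u ∆ v) := hV _ _
  have hne : ((cubeGraph m).induce V).dist ⟨u, hu⟩ ⟨v, hv⟩ ≠ 0 := by
    simpa [hdist, card_eq_zero] using huv
  obtain ⟨p, hp⟩ := SimpleGraph.exists_walk_of_dist_ne_zero hne
  obtain ⟨w, hadj, q, rfl⟩ := SimpleGraph.Walk.exists_eq_cons_of_ne (by simpa using huv) p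
  have hq : #(w.1 ∆ v) ≤ q.length := hV w ⟨v, hv⟩ ▸ SimpleGraph.dist_le q
  have htri : #(u ∆ v) ≤ #(u ∆ w.1) + #(w.1 ∆ v) :=
    (card_le_card (symmDiff_triangle u w.1 v)).trans (card_union_le _ _)
  have h1 : #(u ∆ w.1) = 1 := cubeGraph_adj_iff.1 hadj
  rw [SimpleGraph.Walk.length_cons, hdist] at hp
  exact ⟨w.1, w.2, hadj, by omega⟩

theorem IsPC.exists_mem_hyperplane_between (hV : IsPC V) {i : Fin m} {u v : Finset (Fin m)}
    (hu : u ∈ V) (hv : v ∈ V) (hiu : i ∉ u) (hiv : i ∈ v) :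
    ∃ B ∈ hyperplane V i, u ∩ v ⊆ B ∧ B ⊆ u ∪ v := by
  induction hn : #(u ∆ v) using Nat.strong_induction_on generalizing u with
  | _ n ih =>
    obtain ⟨w, hw, hadj, hsplit⟩ := hV.exists_adj_between hu hv (by rintro rfl; exact hiu hiv)
    by_cases hiw : i ∈ w
    · refine ⟨u, ⟨hiu, hu, ?_⟩, inter_subset_left, subset_union_left⟩
      rwa [← eq_insert_of_cubeGraph_adj hadj hiu hiw]
    · have hlt : #(w ∆ v) < n := by rw [cubeGraph_adj_iff] at hadj; omega
      obtain ⟨B, hB, hlo, hhi⟩ := ih _ hlt hw hiw rfl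
      obtain ⟨hwlo, hwhi⟩ := subset_of_card_symmDiff_add_eq hsplit
      exact ⟨B, hB, fun x hx => hlo (mem_inter.2 ⟨hwlo hx, (mem_inter.1 hx).2⟩),
        hhi.trans (union_subset hwhi subset_union_right)⟩

lemma Shatters.notMem_of_forall_notMem {Y : Finset (Fin m)} {i : Fin m} (h : Shatters V Y)
    (hV : ∀ B ∈ V, i ∉ B) : i ∉ Y := by
  intro hiY
  obtain ⟨B, hB, hBY⟩ := h {i} (singleton_subset_iff.2 hiY)
  exact hV B hB (mem_of_mem_inter_left (hBY ▸ mem_singleton_self i))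

lemma Shatters.insert_of_hyperplane {Y : Finset (Fin m)} {i : Fin m}
    (h : Shatters (hyperplane V i) Y) : Shatters V (insert i Y) := by
  intro Z hZ
  obtain ⟨B, ⟨hiB, hB, hiB'⟩, hBY⟩ := h (Z.erase i) (subset_insert_iff.1 hZ)
  by_cases hiZ : i ∈ Z
  · exact ⟨insert i B, hiB', by rw [← insert_inter_distrib, hBY, insert_erase hiZ]⟩
  · exact ⟨B, hB, by rw [inter_insert_of_notMem hiB, hBY, erase_eq_of_notMem hiZ]⟩

lemma Shatters.hyperplane_erase (hV : IsPC V) {Y : Finset (Fin m)} {i : Fin m}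
    (h : Shatters V Y) (hiY : i ∈ Y) : Shatters (hyperplane V i) (Y.erase i) := by
  intro Z hZ
  have hiZ : i ∉ Z := fun hi => notMem_erase i Y (hZ hi)
  have hZY : Z ⊆ Y := hZ.trans (erase_subset i Y)
  obtain ⟨B₀, hB₀, hB₀Y⟩ := h Z hZY
  obtain ⟨B₁, hB₁, hB₁Y⟩ := h (insert i Z) (insert_subset hiY hZY)
  have hiB₀ : i ∉ B₀ := fun hi => hiZ (hB₀Y ▸ mem_inter.2 ⟨hi, hiY⟩)
  have hiB₁ : i ∈ B₁ := mem_of_mem_inter_left (hB₁Y ▸ mem_insert_self i Z)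
  obtain ⟨B, hB, hlo, hhi⟩ := hV.exists_mem_hyperplane_between hB₀ hB₁ hiB₀ hiB₁
  refine ⟨B, hB, inter_eq_of_subset_of_subset ?_ ?_ hlo hhi⟩
  · rw [inter_erase, hB₀Y, erase_eq_of_notMem hiZ]
  · rw [inter_erase, hB₁Y, erase_insert hiZ]

lemma vcdimLE_hyperplane_of_vcdimLE {d : ℕ} (h : VCdimLE V d) (i : Fin m) :
    VCdimLE (hyperplane V i) (d - 1) := by
  intro Y hY
  have hiY := hY.notMem_of_forall_notMem fun B hB => hB.1
  have := h _ hY.insert_of_hyperplane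
  rw [card_insert_of_notMem hiY] at this
  omega

lemma vcdimLE_of_vcdimLE_hyperplane (hV : IsPC V) {d : ℕ} (hd : 1 ≤ d)
    (h : ∀ i, VCdimLE (hyperplane V i) (d - 1)) : VCdimLE V d := by
  intro Y hY
  obtain rfl | ⟨i, hiY⟩ := Y.eq_empty_or_nonempty
  · exact Nat.zero_le d
  have := h i _ (hY.hyperplane_erase hV hiY)
  rw [card_erase_of_mem hiY] at this
  omega

/-- A partial cube has VC-dimension at most `d` iff each of its hyperplanes has
VC-dimension at most `d - 1`. -/
theorem stmt5 (m d : ℕ) (hd : 1 ≤ d) (V : Set (Finset (Fin m))) (hV : IsPC V) :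
    VCdimLE V d ↔ ∀ i : Fin m, VCdimLE (hyperplane V i) (d - 1) :=
  ⟨vcdimLE_hyperplane_of_vcdimLE, vcdimLE_of_vcdimLE_hyperplane hV hd⟩
end

section
/- If H = SK_n with n ≥ 4 is an isometric subgraph of a partial cube G, then G admits an isometric embedding into a hypercube such that the embedding of H is standard, i.e., each original vertex of H is mapped to a singleton {i} and each subdivision vertex of an edge ij to the pair {i,j}. -/
open Finset

/-!
Pulling back along `psi` and using that `W` and the standard `SK_n` are isometric, the map
`X ↦ psi⁻¹ X` is a Hamming isometry from the standard `SK_n` into `Q_m`. In a hypercube two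
edges `x — x ∆ {p}` and `u — u ∆ {q}` flip the same coordinate iff
`d(x,u) + d(x∆{p}, u∆{q}) ≠ d(x, u∆{q}) + d(x∆{p}, u)` (the Djoković–Winkler relation), so an
isometry sends the edges `{i} — {i,j}`, which all flip `j`, to edges flipping one common
coordinate `e j`, and `e` is injective. Hence `{i}` goes to `C ∆ {e i}` for a fixed `C` and
`{i,j}` to `C ∆ {e i, e j}`; translating the cube by `C` gives the standard embedding.
-/

open SimpleGraph
open scoped symmDiff

lemma SimpleGraph.Iso.dist_le_dist {V V' : Type*} {G : SimpleGraph V} {G' : SimpleGraph V'}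
    (f : G ≃g G') (u v : V) : G'.dist (f u) (f v) ≤ G.dist u v := by
  by_cases h : G.Reachable u v
  · obtain ⟨p, hp⟩ := h.exists_walk_length_eq_dist
    calc G'.dist (f u) (f v) ≤ (p.map f.toHom).length := dist_le _
      _ = G.dist u v := by rw [Walk.length_map, hp]
  · rw [dist_eq_zero_of_not_reachable h, dist_eq_zero_of_not_reachable]
    exact fun hr => h (by simpa using hr.map f.symm.toHom)

lemma SimpleGraph.Iso.dist_apply {V V' : Type*} {G : SimpleGraph V} {G' : SimpleGraph V'}
    (f : G ≃g G') (u v : V) : G'.dist (f u) (f v) = G.dist u v :=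
  (f.dist_le_dist u v).antisymm (by simpa using f.symm.dist_le_dist (f u) (f v))

namespace Finset
variable {α : Type*} [DecidableEq α]

lemma symmDiff_singleton_of_mem {s : Finset α} {a : α} (h : a ∈ s) : s ∆ {a} = s.erase a := by
  ext x
  by_cases hx : x = a <;> simp [mem_symmDiff, hx, h]

lemma symmDiff_singleton_of_notMem {s : Finset α} {a : α} (h : a ∉ s) :
    s ∆ {a} = insert a s := by
  ext x
  by_cases hx : x = a <;> simp [mem_symmDiff, hx, h]

lemma card_symmDiff_singleton (s : Finset α) (a : α) :
    ((s ∆ {a}).card : ℤ) = s.card + if a ∈ s then -1 else 1 := by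
  by_cases h : a ∈ s
  · rw [symmDiff_singleton_of_mem h, if_pos h, ← card_erase_add_one h]; push_cast; ring
  · rw [symmDiff_singleton_of_notMem h, if_neg h, card_insert_of_notMem h]; push_cast; ring

lemma pair_eq_symmDiff {a b : α} (h : a ≠ b) : ({a, b} : Finset α) = {a} ∆ {b} := by
  rw [symmDiff_singleton_of_notMem (by simpa using h.symm), pair_comm]

theorem card_symmDiff_add_card_symmDiff_eq_iff (x u : Finset α) (p q : α) :
    (x ∆ u).card + ((x ∆ {p}) ∆ (u ∆ {q})).card = (x ∆ (u ∆ {q})).card + ((x ∆ {p}) ∆ u).card ↔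
      p ≠ q := by
  rw [← symmDiff_assoc, symmDiff_right_comm x {p} u, ← symmDiff_assoc]
  generalize x ∆ u = s
  have hps := card_symmDiff_singleton s p
  have hqs := card_symmDiff_singleton s q
  rcases eq_or_ne p q with rfl | hpq
  · rw [symmDiff_symmDiff_cancel_right, ne_self_iff_false, iff_false]
    split_ifs at hps <;> omega
  · have hpqs := card_symmDiff_singleton (s ∆ {p}) q
    have hq : q ∈ s ∆ {p} ↔ q ∈ s := by simp [mem_symmDiff, hpq.symm]
    simp only [hq] at hpqs
    simp only [ne_eq, hpq, not_false_eq_true, iff_true]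
    split_ifs at hps hqs hpqs <;> omega

end Finset

theorem flip_eq_iff_of_isometry {α β : Type*} [DecidableEq α] [DecidableEq β]
    {S : Set (Finset α)} {f : S → Finset β} (hf : ∀ X Y, (f X ∆ f Y).card = (X.1 ∆ Y.1).card)
    {x y u v : S} {p q : α} {p' q' : β} (hxy : y.1 = x.1 ∆ {p}) (huv : v.1 = u.1 ∆ {q})
    (hfxy : f y = f x ∆ {p'}) (hfuv : f v = f u ∆ {q'}) : p' = q' ↔ p = q := by
  rw [← not_iff_not, ← ne_eq, ← ne_eq, ← Finset.card_symmDiff_add_card_symmDiff_eq_iff (f x) (f u),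
    ← Finset.card_symmDiff_add_card_symmDiff_eq_iff x.1 u.1, ← hfxy, ← hfuv, ← hxy, ← huv,
    hf, hf, hf, hf]

section PartialCube
variable {m : ℕ} {S : Set (Finset (Fin m))}

lemma card_symmDiff_le_length {u v : S} (p : ((cubeGraph m).induce S).Walk u v) :
    (u.1 ∆ v.1).card ≤ p.length := by
  induction p with
  | nil => simp
  | @cons a b c hadj q ih =>
    have hab : (a.1 ∆ b.1).card = 1 := hadj
    calc (a.1 ∆ c.1).card ≤ (a.1 ∆ b.1).card + (b.1 ∆ c.1).card :=
          (card_le_card (symmDiff_triangle _ _ _)).trans (card_union_le _ _)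
      _ ≤ (Walk.cons _ q).length := by rw [Walk.length_cons]; omega

theorem isPC_of_forall_exists_mem_symmDiff
    (h : ∀ X ∈ S, ∀ Y ∈ S, X ≠ Y → ∃ a ∈ X ∆ Y, X ∆ {a} ∈ S) : IsPC S := by
  have walk : ∀ k (u v : S), (u.1 ∆ v.1).card = k →
      ∃ p : ((cubeGraph m).induce S).Walk u v, p.length = k := by
    intro k
    induction k with
    | zero =>
      intro u v huv
      obtain rfl : u = v := Subtype.ext (symmDiff_eq_bot.mp (card_eq_zero.mp huv))
      exact ⟨.nil, rfl⟩
    | succ k ih =>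
      intro u v huv
      obtain ⟨a, ha, hua⟩ := h u u.2 v v.2 (fun h => by simp [h] at huv)
      obtain ⟨p, hp⟩ := ih ⟨u.1 ∆ {a}, hua⟩ v (by
        rw [symmDiff_right_comm, Finset.symmDiff_singleton_of_mem ha, card_erase_of_mem ha, huv,
          Nat.add_sub_cancel])
      have hadj : ((cubeGraph m).induce S).Adj u ⟨u.1 ∆ {a}, hua⟩ := by
        show (u.1 ∆ (u.1 ∆ {a})).card = 1
        rw [symmDiff_symmDiff_cancel_left, card_singleton]
      exact ⟨.cons hadj p, by rw [Walk.length_cons, hp]⟩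
  intro u v
  obtain ⟨p, hp⟩ := walk _ u v rfl
  obtain ⟨q, hq⟩ := Reachable.exists_walk_length_eq_dist ⟨p⟩
  exact le_antisymm (hp ▸ dist_le p) (hq ▸ card_symmDiff_le_length q)

end PartialCube

namespace SKset
variable {n : ℕ}

lemma singleton_mem (i : Fin n) : {i} ∈ SKset n := Or.inl (card_singleton i)

lemma pair_mem (i j : Fin n) : {i, j} ∈ SKset n := by
  rcases eq_or_ne i j with rfl | h
  · simpa using singleton_mem i
  · exact Or.inr (card_pair h)

theorem isPC : IsPC (SKset n) := by
  refine isPC_of_forall_exists_mem_symmDiff fun X hX Y hY hXY => ?_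
  rcases hX with hX | hX
  · obtain ⟨a, haY, haX⟩ : ∃ a ∈ Y, a ∉ X := by
      by_contra! hYX
      exact hXY (eq_of_subset_of_card_le hYX (by rcases hY with hY | hY <;> omega)).symm
    refine ⟨a, by simp [mem_symmDiff, haY, haX], Or.inr ?_⟩
    rw [Finset.symmDiff_singleton_of_notMem haX, card_insert_of_notMem haX, hX]
  · obtain ⟨a, haX, haY⟩ : ∃ a ∈ X, a ∉ Y := by
      by_contra! hXY'
      exact hXY (eq_of_subset_of_card_le hXY' (by rcases hY with hY | hY <;> omega))
    refine ⟨a, by simp [mem_symmDiff, haY, haX], Or.inl ?_⟩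
    rw [Finset.symmDiff_singleton_of_mem haX, card_erase_of_mem haX, hX]

theorem exists_eq_symmDiff_image_of_isometry {m : ℕ} (hn : 2 ≤ n) (f : SKset n → Finset (Fin m))
    (hf : ∀ X Y, (f X ∆ f Y).card = (X.1 ∆ Y.1).card) :
    ∃ (C : Finset (Fin m)) (e : Fin n → Fin m), Function.Injective e ∧
      ∀ X, f X = C ∆ X.1.image e := by
  set a : Fin n → Finset (Fin m) := fun i => f ⟨{i}, singleton_mem i⟩
  set b : Fin n → Fin n → Finset (Fin m) := fun i j => f ⟨{i, j}, pair_mem i j⟩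
  have flip : ∀ i j, i ≠ j → ∃ t, b i j = a i ∆ {t} := by
    intro i j hij
    obtain ⟨t, ht⟩ : ∃ t, a i ∆ b i j = {t} := card_eq_one.mp <| by
      rw [hf]
      change ({i} ∆ {i, j} : Finset (Fin n)).card = 1
      rw [Finset.pair_eq_symmDiff hij, symmDiff_symmDiff_cancel_left, card_singleton]
    exact ⟨t, by rw [← ht, symmDiff_symmDiff_cancel_left]⟩
  choose t ht using flip
  have theta : ∀ i j k l (hij : i ≠ j) (hkl : k ≠ l), t i j hij = t k l hkl ↔ j = l :=
    fun i j k l hij hkl => flip_eq_iff_of_isometry hf (Finset.pair_eq_symmDiff hij)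
      (Finset.pair_eq_symmDiff hkl) (ht i j hij) (ht k l hkl)
  have : Nontrivial (Fin n) := Fin.nontrivial_iff_two_le.mpr hn
  choose o ho using fun j : Fin n => exists_ne j
  set e : Fin n → Fin m := fun j => t (o j) j (ho j)
  have hb : ∀ i j, i ≠ j → b i j = a i ∆ {e j} := fun i j hij => by
    rw [ht i j hij, (theta _ _ _ _ _ _).mpr rfl]
  have he : Function.Injective e := fun j l hjl => (theta _ _ _ _ _ _).mp hjl
  obtain ⟨i₀⟩ : Nonempty (Fin n) := ⟨⟨0, by omega⟩⟩
  have ha : ∀ i, a i = a i₀ ∆ {e i₀} ∆ {e i} := by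
    intro i
    rcases eq_or_ne i i₀ with rfl | hi
    · rw [symmDiff_symmDiff_cancel_right]
    · have hba : b i i₀ = b i₀ i := by simp only [b, pair_comm]
      calc a i = a i ∆ {e i₀} ∆ {e i₀} := (symmDiff_symmDiff_cancel_right _ _).symm
        _ = a i₀ ∆ {e i} ∆ {e i₀} := by rw [← hb i i₀ hi, ← hb i₀ i hi.symm, hba]
        _ = a i₀ ∆ {e i₀} ∆ {e i} := symmDiff_right_comm _ _ _
  refine ⟨a i₀ ∆ {e i₀}, e, he, fun ⟨X, hX⟩ => ?_⟩
  rcases hX with hX | hX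
  · obtain ⟨i, rfl⟩ := card_eq_one.mp hX
    rw [image_singleton]
    exact ha i
  · obtain ⟨i, j, hij, rfl⟩ := card_eq_two.mp hX
    rw [image_insert, image_singleton, Finset.pair_eq_symmDiff (he.ne hij), ← symmDiff_assoc,
      ← ha i, ← hb i j hij]

end SKset

theorem stmt8_general (m n : ℕ) (hn : 4 ≤ n) (V W : Set (Finset (Fin m)))
    (hW : IsPC W)
    (psi : ((cubeGraph m).induce W) ≃g ((cubeGraph n).induce (SKset n))) :
    ∃ (m' : ℕ) (phi : Finset (Fin m) → Finset (Fin m'))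
      (iota : Fin n → Fin m'), Function.Injective iota ∧
      (∀ u ∈ V, ∀ v ∈ V,
        (symmDiff (phi u) (phi v)).card = (symmDiff u v).card) ∧
      ∀ w : W, phi w.1 = Finset.image iota (psi w).1 := by
  have hf : ∀ X Y, ((psi.symm X).1 ∆ (psi.symm Y).1).card = (X.1 ∆ Y.1).card := fun X Y => by
    rw [← hW, psi.symm.dist_apply, SKset.isPC]
  obtain ⟨C, e, he, hfe⟩ := SKset.exists_eq_symmDiff_image_of_isometry (by omega) _ hf
  refine ⟨m, (· ∆ C), e, he, fun u _ v _ => ?_, fun w => ?_⟩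
  · rw [symmDiff_symmDiff_symmDiff_comm, symmDiff_self, symmDiff_bot]
  · have hw := hfe (psi w)
    rw [psi.symm_apply_apply] at hw
    exact hw ▸ symmDiff_symmDiff_self' _ _

/-- If `SK_n` (`n ≥ 4`) is an isometric subgraph of a partial cube `V`, then `V`
admits an isometric embedding into a hypercube in which this `SK_n` is
standardly embedded. -/
theorem stmt8 (m n : ℕ) (hn : 4 ≤ n) (V W : Set (Finset (Fin m)))
    (hV : IsPC V) (hWV : W ⊆ V) (hW : IsPC W)
    (psi : ((cubeGraph m).induce W) ≃g ((cubeGraph n).induce (SKset n))) :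
    ∃ (m' : ℕ) (phi : Finset (Fin m) → Finset (Fin m'))
      (iota : Fin n → Fin m'), Function.Injective iota ∧
      (∀ u ∈ V, ∀ v ∈ V,
        (symmDiff (phi u) (phi v)).card = (symmDiff u v).card) ∧
      ∀ w : W, phi w.1 = Finset.image iota (psi w).1 :=
  stmt8_general m n hn V W hW psi
end

section
/- Let H be an antipodal partial cube in F(Q_{d+1}) and let G be a proper convex subgraph of H. Then G ∈ F(Q_d), i.e., G does not have Q_d as a pc-minor. -/
open Finset

/-! If the proper convex subgraph `S` shatters a set `X` of coordinates (which is what a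
`Q_d` pc-minor amounts to), then `V` shatters `X` together with one more coordinate `i`.
Indeed `S` lies in a halfspace of `V` cut out by some coordinate `i`, so it realises every
pattern on `insert i X` lying on its side of `i`; and in an antipodal partial cube the antipode
of a vertex complements its trace on every non-constant coordinate, which realises the patterns
on the other side. Contracting all coordinates outside `insert i X` then yields `Q_{d+1}`. -/

theorem hdist_add_hdist_eq_iff_s16 {m : ℕ} (A B C : Finset (Fin m)) :
    hdist A B + hdist B C = hdist A C ↔ A ∩ C ⊆ B ∧ B ⊆ A ∪ C := by
  unfold hdist
  set P := symmDiff A B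
  set Q := symmDiff B C
  have hAC : symmDiff A C = (P ∪ Q) \ (P ∩ Q) := by
    rw [← sup_eq_union, ← inf_eq_inter, ← symmDiff_eq_sup_sdiff_inf, symmDiff_assoc,
      symmDiff_symmDiff_cancel_left]
  have hPQ : P ∩ Q = ∅ ↔ A ∩ C ⊆ B ∧ B ⊆ A ∪ C := by
    simp only [eq_empty_iff_forall_notMem, mem_inter, P, Q, mem_symmDiff, subset_iff,
      mem_union]
    grind
  have := card_union_add_card_inter P Q
  have := card_le_card (inter_subset_union (s := P) (t := Q))
  rw [← hPQ, ← card_eq_zero, hAC, card_sdiff_of_subset inter_subset_union]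
  omega

theorem IsPC.exists_adj_hdist_lt {m : ℕ} {V : Set (Finset (Fin m))} (hV : IsPC V)
    {u v : Finset (Fin m)} (hu : u ∈ V) (hv : v ∈ V) (huv : u ≠ v) :
    ∃ y ∈ V, hdist u y = 1 ∧ hdist y v < hdist u v := by
  have hdist_uv : ((cubeGraph m).induce V).dist ⟨u, hu⟩ ⟨v, hv⟩ = hdist u v := hV _ _
  have hpos : hdist u v ≠ 0 := by simpa [hdist, card_eq_zero] using huv
  obtain ⟨p, hp⟩ := SimpleGraph.exists_walk_of_dist_ne_zero (hdist_uv ▸ hpos)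
  cases p with
  | nil => exact (hpos (by rw [← hdist_uv, ← hp, SimpleGraph.Walk.length_nil])).elim
  | @cons _ y _ hadj q =>
    refine ⟨y, y.2, hadj, ?_⟩
    have hq := SimpleGraph.dist_le q
    rw [SimpleGraph.Walk.length_cons, hdist_uv] at hp
    have hyv : ((cubeGraph m).induce V).dist y ⟨v, hv⟩ = hdist y v := hV _ _
    omega

theorem IsConvexIn.exists_halfspace {m : ℕ} {V S : Set (Finset (Fin m))} (hV : IsPC V)
    (hS : IsConvexIn V S) (hne : S.Nonempty) (hSV : S ≠ V) :
    ∃ i, ∃ x ∈ V, ∀ B ∈ S, (i ∈ B ↔ i ∉ x) := by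
  obtain ⟨v, hvV, hvS⟩ := Set.exists_of_ssubset (hS.1.ssubset_of_ne hSV)
  obtain ⟨u, huS, hmin⟩ := Set.exists_min_image S (hdist · v) (Set.toFinite S) hne
  obtain ⟨y, hyV, huy, hyv⟩ :=
    hV.exists_adj_hdist_lt (hS.1 huS) hvV (by rintro rfl; exact hvS huS)
  have hyS : y ∉ S := fun hyS => (hmin y hyS).not_gt hyv
  obtain ⟨i, huy⟩ := card_eq_one.mp huy
  have hi : ∀ j, (j ∈ u ↔ j ∈ y) ↔ j ≠ i := fun j => by
    have := congrArg (j ∈ ·) huy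
    simp only [mem_symmDiff, mem_singleton, eq_iff_iff] at this
    tauto
  refine ⟨i, y, hyV, fun B hB => ?_⟩
  by_contra hiB
  refine hyS (hS.2 u huS B hB y hyV ((hdist_add_hdist_eq_iff_s16 u y B).mpr
    ⟨fun j hj => ?_, fun j hj => ?_⟩))
  all_goals
    have := hi j
    simp only [mem_inter, mem_union] at hj ⊢
    grind

theorem isConvexIn_interval {m : ℕ} (V : Set (Finset (Fin m))) (v w : Finset (Fin m)) :
    IsConvexIn V {B ∈ V | v ∩ w ⊆ B ∧ B ⊆ v ∪ w} := by
  refine ⟨fun B hB => hB.1, ?_⟩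
  rintro a ⟨-, hva, hav⟩ b ⟨-, hvb, hbv⟩ x hxV hx
  obtain ⟨habx, hxab⟩ := (hdist_add_hdist_eq_iff_s16 a x b).mp hx
  exact ⟨hxV, (subset_inter hva hvb).trans habx, hxab.trans (union_subset hav hbv)⟩

theorem exists_antipode_interval {m : ℕ} {V : Set (Finset (Fin m))}
    (hant : ∀ v ∈ V, ∃ w ∈ V, convexHullIn V {v, w} = V) {v : Finset (Fin m)} (hv : v ∈ V) :
    ∃ w ∈ V, ∀ B ∈ V, v ∩ w ⊆ B ∧ B ⊆ v ∪ w := by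
  obtain ⟨w, hw, hvw⟩ := hant v hv
  have hpair : ({v, w} : Set (Finset (Fin m))) ⊆ {B ∈ V | v ∩ w ⊆ B ∧ B ⊆ v ∪ w} := by
    rintro B (rfl | rfl)
    · exact ⟨hv, inter_subset_left, subset_union_left⟩
    · exact ⟨hw, inter_subset_right, subset_union_right⟩
  have hhull : convexHullIn V {v, w} ⊆ {B ∈ V | v ∩ w ⊆ B ∧ B ⊆ v ∪ w} :=
    Set.sInter_subset_of_mem ⟨hpair, isConvexIn_interval V v w⟩
  rw [hvw] at hhull
  exact ⟨w, hw, fun B hB => (hhull hB).2⟩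

theorem inter_eq_sdiff_of_interval {m : ℕ} {V : Set (Finset (Fin m))} {v w K : Finset (Fin m)}
    (hw : ∀ B ∈ V, v ∩ w ⊆ B ∧ B ⊆ v ∪ w)
    (hK : ∀ j ∈ K, (∃ B ∈ V, j ∈ B) ∧ ∃ B ∈ V, j ∉ B) :
    w ∩ K = K \ v := by
  ext j
  simp only [mem_inter, mem_sdiff]
  constructor
  · rintro ⟨hjw, hjK⟩
    obtain ⟨-, B, hB, hjB⟩ := hK j hjK
    exact ⟨hjK, fun hjv => hjB ((hw B hB).1 (mem_inter.mpr ⟨hjv, hjw⟩))⟩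
  · rintro ⟨hjK, hjv⟩
    obtain ⟨⟨B, hB, hjB⟩, -⟩ := hK j hjK
    exact ⟨(mem_union.mp ((hw B hB).2 hjB)).resolve_left hjv, hjK⟩

theorem Shatters.nonempty {m : ℕ} {S : Set (Finset (Fin m))} {X : Finset (Fin m)}
    (hS : Shatters S X) : S.Nonempty :=
  let ⟨B, hB, _⟩ := hS ∅ (empty_subset X)
  ⟨B, hB⟩

theorem Shatters.exists_mem_and_exists_notMem {m : ℕ} {S : Set (Finset (Fin m))}
    {X : Finset (Fin m)} (hS : Shatters S X) {j : Fin m} (hj : j ∈ X) :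
    (∃ B ∈ S, j ∈ B) ∧ ∃ B ∈ S, j ∉ B := by
  obtain ⟨B, hB, hBX⟩ := hS X subset_rfl
  obtain ⟨B', hB', hB'X⟩ := hS ∅ (empty_subset X)
  refine ⟨⟨B, hB, (mem_inter.mp (hBX ▸ hj)).1⟩, ⟨B', hB', fun hjB' => ?_⟩⟩
  simpa [hB'X] using mem_inter.mpr ⟨hjB', hj⟩

theorem Shatters.insert_of_halfspace {m : ℕ} {V S : Set (Finset (Fin m))}
    {X x : Finset (Fin m)} {i : Fin m}
    (hV : ∀ v ∈ V, ∃ w ∈ V, ∀ B ∈ V, v ∩ w ⊆ B ∧ B ⊆ v ∪ w)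
    (hSV : S ⊆ V) (hS : Shatters S X) (hx : x ∈ V) (hi : ∀ B ∈ S, (i ∈ B ↔ i ∉ x)) :
    Shatters V (insert i X) := by
  have hsplit : ∀ j ∈ insert i X, (∃ B ∈ V, j ∈ B) ∧ ∃ B ∈ V, j ∉ B := by
    intro j hj
    rcases mem_insert.mp hj with rfl | hjX
    · obtain ⟨B, hB⟩ := hS.nonempty
      by_cases hjx : j ∈ x
      · exact ⟨⟨x, hx, hjx⟩, ⟨B, hSV hB, fun hjB => (hi B hB).mp hjB hjx⟩⟩
      · exact ⟨⟨B, hSV hB, (hi B hB).mpr hjx⟩, ⟨x, hx, hjx⟩⟩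
    · obtain ⟨⟨B, hB, hjB⟩, ⟨B', hB', hjB'⟩⟩ := hS.exists_mem_and_exists_notMem hjX
      exact ⟨⟨B, hSV hB, hjB⟩, ⟨B', hSV hB', hjB'⟩⟩
  have hhalf : ∀ T ⊆ insert i X, (i ∈ T ↔ i ∉ x) → ∃ B ∈ V, B ∩ insert i X = T := by
    intro T hT hiT
    obtain ⟨B, hB, hBX⟩ := hS (T ∩ X) inter_subset_right
    refine ⟨B, hSV hB, ?_⟩
    ext j
    have hj := congrArg (j ∈ ·) hBX
    have hjT := @hT j
    simp only [mem_inter, mem_insert, eq_iff_iff] at hj hjT ⊢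
    have := hi B hB
    grind
  intro T hT
  by_cases hiT : i ∈ T ↔ i ∉ x
  · exact hhalf T hT hiT
  obtain ⟨B, hBV, hB⟩ := hhalf (insert i X \ T) sdiff_subset (by
    simp only [mem_sdiff, mem_insert_self, true_and]
    tauto)
  obtain ⟨w, hw, hwB⟩ := hV B hBV
  refine ⟨w, hw, ?_⟩
  rw [inter_eq_sdiff_of_interval hwB hsplit, ← sdiff_inter_self_right, hB,
    Finset.sdiff_sdiff_eq_self hT]

theorem PCStep.shatters {m : ℕ} {V W : Set (Finset (Fin m))} {X : Finset (Fin m)}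
    (h : PCStep V W) (hW : Shatters W X) : Shatters V X := by
  cases h with
  | contract i =>
    -- no vertex of the contraction contains `i`, so `i` cannot be shattered
    have hiX : i ∉ X := fun hiX => by
      obtain ⟨_, ⟨B, -, rfl⟩, hB⟩ := hW {i} (singleton_subset_iff.mpr hiX)
      simpa using congrArg (i ∈ ·) hB
    intro Z hZ
    obtain ⟨_, ⟨B, hB, rfl⟩, hBZ⟩ := hW Z hZ
    refine ⟨B, hB, ?_⟩
    rwa [erase_inter, erase_eq_of_notMem (fun hi => hiX (mem_inter.mp hi).2)] at hBZ
  | restrictPos i => exact fun Z hZ => let ⟨B, hB, hBZ⟩ := hW Z hZ; ⟨B, hB.1, hBZ⟩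
  | restrictNeg i => exact fun Z hZ => let ⟨B, hB, hBZ⟩ := hW Z hZ; ⟨B, hB.1, hBZ⟩

theorem PCMinor.shatters {m : ℕ} {V W : Set (Finset (Fin m))} {X : Finset (Fin m)}
    (h : PCMinor V W) (hW : Shatters W X) : Shatters V X := by
  induction h with
  | refl => exact hW
  | tail _ hstep ih => exact ih (hstep.shatters hW)

theorem IsCubeFam.exists_shatters {m k : ℕ} {W : Set (Finset (Fin m))} (hW : IsCubeFam k W) :
    ∃ X : Finset (Fin m), X.card = k ∧ Shatters W X := by
  obtain ⟨Y, X, hYX, hX, rfl⟩ := hW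
  refine ⟨X, hX, fun Z hZ => ⟨Y ∪ Z, ⟨Z, hZ, rfl⟩, ?_⟩⟩
  rw [union_inter_distrib_right, disjoint_iff_inter_eq_empty.mp hYX, empty_union,
    inter_eq_left.mpr hZ]

theorem HasQMinor.exists_shatters {m k : ℕ} {V : Set (Finset (Fin m))} (h : HasQMinor V k) :
    ∃ X : Finset (Fin m), X.card = k ∧ Shatters V X :=
  let ⟨_, hVW, hW⟩ := h
  let ⟨X, hX, hWX⟩ := hW.exists_shatters
  ⟨X, hX, hVW.shatters hWX⟩

theorem pcMinor_image_sdiff {m : ℕ} (V : Set (Finset (Fin m))) (C : Finset (Fin m)) :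
    PCMinor V ((· \ C) '' V) := by
  induction C using Finset.induction_on with
  | empty =>
    simp only [sdiff_empty, Set.image_id']
    exact Relation.ReflTransGen.refl
  | @insert a C _ ih =>
    convert ih.tail (PCStep.contract a _) using 1
    rw [Set.image_image]
    congr! 2 with B
    rw [sdiff_insert]

theorem Shatters.hasQMinor {m : ℕ} {V : Set (Finset (Fin m))} {K : Finset (Fin m)}
    (h : Shatters V K) : HasQMinor V K.card := by
  refine ⟨_, pcMinor_image_sdiff V Kᶜ, ∅, K, disjoint_empty_left K, rfl, ?_⟩
  ext T
  simp only [sdiff_compl, Set.mem_image, Set.mem_ofPred_eq, empty_union]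
  constructor
  · rintro ⟨B, -, rfl⟩
    exact ⟨B ∩ K, inter_subset_right, rfl⟩
  · rintro ⟨Z, hZ, rfl⟩
    exact h _ hZ

/-- A proper convex subgraph of an antipodal partial cube in `F(Q_{d+1})`
belongs to `F(Q_d)`. -/
theorem stmt16 (m d : ℕ) (V S : Set (Finset (Fin m))) (hV : IsPC V)
    (hant : ∀ v ∈ V, ∃ w ∈ V, convexHullIn V {v, w} = V)
    (hQ : ¬ HasQMinor V (d + 1)) (hconv : IsConvexIn V S) (hproper : S ≠ V) :
    ¬ HasQMinor S d := by
  intro hQS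
  obtain ⟨X, rfl, hXS⟩ := hQS.exists_shatters
  obtain ⟨i, x, hx, hi⟩ := hconv.exists_halfspace hV hXS.nonempty hproper
  have hiX : i ∉ X := fun hiX => by
    obtain ⟨⟨B, hB, hiB⟩, ⟨B', hB', hiB'⟩⟩ := hXS.exists_mem_and_exists_notMem hiX
    exact hiB' ((hi B' hB').mpr ((hi B hB).mp hiB))
  apply hQ
  rw [← card_insert_of_notMem hiX]
  exact (hXS.insert_of_halfspace (fun v hv => exists_antipode_interval hant hv) hconv.1 hx
    hi).hasQMinor
end
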